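/- arXiv:2012.07368 — 3 statements merged into one kernel-verified Lean document; each statement's English description precedes it below -/
import Mathlib

section
/- Let A and B be n×n real symmetric positive semidefinite matrices. Then A and B are simultaneously diagonalizable by congruence: there exists a nonsingular matrix D ∈ ℝ^{n×n} such that both DᵀAD and DᵀBD are diagonal. -/
/-!
Congruence by the eigenvector matrix of `A + B` followed by a diagonal rescaling turns `A + B`
into an orthogonal projection `P`. For the transformed matrices, `X + Y = P` with `X, Y ⪰ 0`, and
positivity forces `X (1 - P) = 0`. A unitary diagonalizing the Hermitian matrix `X - (1 - P)` then
also diagonalizes `1 - P`, since on the range of `1 - P` this matrix acts as `-1`, away from the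
nonnegative spectrum of `X`. Hence `X` and `Y = P - X` become diagonal as well.
-/

open Matrix

namespace Matrix

variable {m n 𝕜 : Type*} [Fintype n] [RCLike 𝕜]

open scoped ComplexOrder MatrixOrder

theorem PosSemidef.mul_eq_zero_of_conjTranspose_mul_mul_eq_zero {M : Matrix n n 𝕜}
    (hM : M.PosSemidef) {X : Matrix n m 𝕜} (h : Xᴴ * M * X = 0) : M * X = 0 := by
  ext i j
  have hj : star (Xᵀ j) ⬝ᵥ M *ᵥ Xᵀ j = 0 := by
    have hjj : (Xᴴ * M * X) j j = star (Xᵀ j) ⬝ᵥ M *ᵥ Xᵀ j := by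
      simp only [Matrix.mul_apply, dotProduct, mulVec, Finset.mul_sum, Finset.sum_mul, mul_assoc]
      rw [Finset.sum_comm]
      rfl
    rw [← hjj, h, zero_apply]
  simpa [mulVec, dotProduct, Matrix.mul_apply] using
    congrFun ((hM.dotProduct_mulVec_zero_iff _).1 hj) i

theorem PosSemidef.apply_eq_zero_of_diag_eq_zero [DecidableEq n] {M : Matrix n n 𝕜}
    (hM : M.PosSemidef) {i : n} (h : M i i = 0) (j : n) : M j i = 0 := by
  have hi : star (Pi.single i 1) ⬝ᵥ M *ᵥ Pi.single i (1 : 𝕜) = 0 := by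
    simpa [mulVec_single, dotProduct_single] using h
  simpa [mulVec_single] using congrFun ((hM.dotProduct_mulVec_zero_iff _).1 hi) j

theorem isDiag_of_isIdempotentElem_of_sub_eq_diagonal [DecidableEq n] {X Z : Matrix n n 𝕜}
    {d : n → 𝕜} (hX : X.PosSemidef) (hZ : (1 - Z).PosSemidef) (hZZ : IsIdempotentElem Z)
    (hXZ : X * Z = 0) (hd : X - Z = diagonal d) : Z.IsDiag := by
  have hdZ : diagonal d * Z = -Z := by
    rw [← hd, Matrix.sub_mul, hXZ, hZZ.eq, zero_sub]
  intro i j hij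
  -- Row `i` of `Z` is killed by `d i + 1`; if `d i = -1` then `0 ≤ X i i = Z i i - 1 ≤ 0`.
  by_cases hdi : d i = -1
  · have hXii : X i i = 0 := by
      have h1 := congrFun (congrFun hd i) i
      have h2 := hZ.diag_nonneg (i := i)
      have h3 := hX.diag_nonneg (i := i)
      simp only [sub_apply, diagonal_apply_eq, hdi, one_apply_eq] at h1 h2
      refine le_antisymm ?_ h3
      calc X i i = -(1 - Z i i) := by linear_combination h1
        _ ≤ 0 := neg_nonpos.mpr h2
    have hXij : X i j = 0 := by
      rw [← hX.1.apply i j, hX.apply_eq_zero_of_diag_eq_zero hXii j, star_zero]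
    simpa [hXij, hij] using congrFun (congrFun hd i) j
  · have h := congrFun (congrFun hdZ i) j
    rw [diagonal_mul, neg_apply, ← add_eq_zero_iff_eq_neg, ← add_one_mul] at h
    exact (mul_eq_zero.mp h).resolve_left (fun h' => hdi (eq_neg_of_add_eq_zero_left h'))

theorem _root_.RCLike.exists_ne_zero_star_mul_mul_eq {x : ℝ} (hx : 0 ≤ x) :
    ∃ c : 𝕜, c ≠ 0 ∧ star c * x * c = if x = 0 then 0 else 1 := by
  by_cases h : x = 0
  · exact ⟨1, one_ne_zero, by simp [h]⟩
  · have hpos : 0 < x := hx.lt_of_ne' h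
    refine ⟨((√x)⁻¹ : ℝ), by simp [Real.sqrt_ne_zero'.mpr hpos], ?_⟩
    simp only [h, if_false, RCLike.star_def, RCLike.conj_ofReal]
    rw [← RCLike.ofReal_mul, ← RCLike.ofReal_mul, ← RCLike.ofReal_one]
    congr 1
    field_simp
    exact (Real.sq_sqrt hx).symm

theorem PosSemidef.exists_isUnit_isIdempotentElem_conjTranspose_mul_mul [DecidableEq n]
    {S : Matrix n n 𝕜} (hS : S.PosSemidef) :
    ∃ D : Matrix n n 𝕜, IsUnit D ∧ IsIdempotentElem (Dᴴ * S * D) := by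
  set U : Matrix n n 𝕜 := (hS.1.eigenvectorUnitary : Matrix n n 𝕜)
  set μ := hS.1.eigenvalues
  choose f hf0 hf using fun i =>
    RCLike.exists_ne_zero_star_mul_mul_eq (𝕜 := 𝕜) (hS.eigenvalues_nonneg i)
  have hUSU : Uᴴ * S * U = diagonal (RCLike.ofReal ∘ μ) := by
    simpa [U, μ, star_eq_conjTranspose] using hS.1.conjStarAlgAut_star_eigenvectorUnitary
  refine ⟨U * diagonal f, Unitary.isUnit_coe.mul
    (isUnit_diagonal.mpr (Pi.isUnit_iff.mpr fun i => (hf0 i).isUnit)), ?_⟩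
  have hP : (U * diagonal f)ᴴ * S * (U * diagonal f) =
      diagonal fun i => if μ i = 0 then 0 else 1 :=
    calc _ = (diagonal f)ᴴ * (Uᴴ * S * U) * diagonal f := by
          simp only [conjTranspose_mul, Matrix.mul_assoc]
      _ = _ := by
        rw [hUSU, diagonal_conjTranspose, diagonal_mul_diagonal, diagonal_mul_diagonal]
        exact congrArg diagonal (funext hf)
  rw [hP, IsIdempotentElem, diagonal_mul_diagonal]
  congr 1; ext i; split_ifs <;> simp

open Unitary in
theorem PosSemidef.exists_mem_unitary_isDiag_of_isIdempotentElem_add [DecidableEq n]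
    {X Y : Matrix n n 𝕜} (hX : X.PosSemidef) (hY : Y.PosSemidef)
    (hP : IsIdempotentElem (X + Y)) :
    ∃ V ∈ unitary (Matrix n n 𝕜), (Vᴴ * X * V).IsDiag ∧ (Vᴴ * Y * V).IsDiag := by
  set P := X + Y with hPdef
  set Q := 1 - P
  have hPsd : P.PosSemidef := hX.add hY
  have hXQ : X * Q = 0 := by
    refine hX.mul_eq_zero_of_conjTranspose_mul_mul_eq_zero ?_
    have hQPQ : Qᴴ * X * Q + Qᴴ * Y * Q = 0 := by
      rw [← Matrix.add_mul, ← Matrix.mul_add, ← hPdef, (isHermitian_one.sub hPsd.1).eq]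
      simp only [Q, Matrix.sub_mul, Matrix.mul_sub, Matrix.one_mul, Matrix.mul_one,
        Matrix.zero_mul, hP.eq, sub_self]
    exact ((add_eq_zero_iff_of_nonneg (hX.conjTranspose_mul_mul_same Q).nonneg
      (hY.conjTranspose_mul_mul_same Q).nonneg).1 hQPQ).1
  have hM : (X - Q).IsHermitian := hX.1.sub (isHermitian_one.sub hPsd.1)
  set V := hM.eigenvectorUnitary
  set φ := conjStarAlgAut 𝕜 (Matrix n n 𝕜) (star V)
  have hφ (A : Matrix n n 𝕜) : φ A = (V : Matrix n n 𝕜)ᴴ * A * V := by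
    simp [φ, star_eq_conjTranspose]
  have hQ : (φ Q).IsDiag := by
    refine isDiag_of_isIdempotentElem_of_sub_eq_diagonal (X := φ X) ?_ ?_ ?_ ?_
      (by rw [← map_sub]; exact hM.conjStarAlgAut_star_eigenvectorUnitary)
    · rw [hφ]; exact hX.conjTranspose_mul_mul_same _
    · rw [← map_one φ, ← map_sub, sub_sub_cancel, hφ]
      exact hPsd.conjTranspose_mul_mul_same _
    · rw [IsIdempotentElem, ← map_mul, hP.one_sub.eq]
    · rw [← map_mul, hXQ, map_zero]
  have hXdiag : (φ X).IsDiag := by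
    rw [← sub_add_cancel X Q, map_add, hM.conjStarAlgAut_star_eigenvectorUnitary]
    exact (isDiag_diagonal _).add hQ
  refine ⟨V, V.2, hφ X ▸ hXdiag, ?_⟩
  have hY : φ Y = 1 - φ Q - φ X := by
    rw [← map_one φ, ← map_sub, ← map_sub, sub_sub_cancel, hPdef, add_sub_cancel_left]
  rw [← hφ, hY]
  exact (isDiag_one.sub hQ).sub hXdiag

theorem PosSemidef.exists_isUnit_isDiag_conjTranspose_mul_mul [DecidableEq n]
    {A B : Matrix n n 𝕜} (hA : A.PosSemidef) (hB : B.PosSemidef) :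
    ∃ D : Matrix n n 𝕜, IsUnit D ∧ (Dᴴ * A * D).IsDiag ∧ (Dᴴ * B * D).IsDiag := by
  obtain ⟨D, hD, hP⟩ := (hA.add hB).exists_isUnit_isIdempotentElem_conjTranspose_mul_mul
  rw [Matrix.mul_add, Matrix.add_mul] at hP
  obtain ⟨V, hV, hVA, hVB⟩ :=
    (hA.conjTranspose_mul_mul_same D).exists_mem_unitary_isDiag_of_isIdempotentElem_add
      (hB.conjTranspose_mul_mul_same D) hP
  refine ⟨D * V, hD.mul (Unitary.isUnit_coe (U := ⟨V, hV⟩)), ?_, ?_⟩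
  · simpa only [conjTranspose_mul, Matrix.mul_assoc] using hVA
  · simpa only [conjTranspose_mul, Matrix.mul_assoc] using hVB

end Matrix

theorem stmt2 {n : ℕ} (A B : Matrix (Fin n) (Fin n) ℝ)
    (hA : A.PosSemidef) (hB : B.PosSemidef) :
    ∃ D : Matrix (Fin n) (Fin n) ℝ, IsUnit D ∧ (Dᵀ * A * D).IsDiag ∧ (Dᵀ * B * D).IsDiag := by
  simpa only [conjTranspose_eq_transpose_of_trivial] using
    hA.exists_isUnit_isDiag_conjTranspose_mul_mul hB
end

section
/- Under the same setting, if additionally t̄ᵢ ≤ (lᵢ + uᵢ)z̄ᵢ - lᵢuᵢ and lᵢ ≤ z̄ᵢ ≤ uᵢ for all i = 1,…,r, then g(z̄) ≤ (r + ρ₁s)/4 · max_{i=1,…,r} (uᵢ - lᵢ)². -/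
/-!
Since `t̄ᵢ` lies below the secant of `z ↦ z²` over `[lᵢ, uᵢ]`, the gap `t̄ᵢ - z̄ᵢ²` is at most
`(lᵢ + uᵢ) z̄ᵢ - lᵢuᵢ - z̄ᵢ² = (uᵢ - lᵢ)²/4 - (z̄ᵢ - (lᵢ + uᵢ)/2)² ≤ (uᵢ - lᵢ)²/4`.
As `ψ(z̄)` is bounded by the relaxed terms `Σ θᵢ t̄ᵢ + ρ₁ Σ δᵢ t̄ᵢ`, the violation `g(z̄)` is a
combination of these gaps with weights in `[0, 1]`: `r` of them with factor `1` and `s` with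
factor `ρ₁`.
-/

theorem sub_sq_le_of_le_secant {l u z t : ℝ} (h : t ≤ (l + u) * z - l * u) :
    t - z ^ 2 ≤ (u - l) ^ 2 / 4 := by
  nlinarith [sq_nonneg (z - (l + u) / 2)]

theorem sum_mul_le_card_mul_of_le {ι : Type*} [Fintype ι] {w a : ι → ℝ} {c : ℝ}
    (hw : ∀ i, 0 ≤ w i ∧ w i ≤ 1) (ha : ∀ i, a i ≤ c) (hc : 0 ≤ c) :
    ∑ i, w i * a i ≤ Fintype.card ι * c := by
  have hterm (i : ι) : w i * a i ≤ c :=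
    (mul_le_mul_of_nonneg_left (ha i) (hw i).1).trans (mul_le_of_le_one_left hc (hw i).2)
  simpa using Finset.sum_le_sum fun i (_ : i ∈ Finset.univ) => hterm i

theorem stmt12_general {m r s : ℕ} (hr : r ≤ m) (hs : s ≤ r) (hr0 : 0 < r)
    (ψ : (Fin m → ℝ) → ℝ) (θ : Fin r → ℝ) (δ : Fin s → ℝ)
    (hθ : ∀ i, 0 < θ i ∧ θ i ≤ 1) (hδ : ∀ i, 0 < δ i ∧ δ i ≤ 1)
    (ρ₁ : ℝ) (hρ : 0 < ρ₁) (zbar : Fin m → ℝ) (tbar : Fin r → ℝ)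
    (l u : Fin r → ℝ)
    (hrel : ψ zbar - ∑ i : Fin r, θ i * tbar i
        - ρ₁ * ∑ i : Fin s, δ i * tbar (Fin.castLE hs i) ≤ 0)
    (hsec : ∀ i : Fin r, tbar i ≤ (l i + u i) * zbar (Fin.castLE hr i) - l i * u i) :
    ψ zbar - ∑ i : Fin r, θ i * zbar (Fin.castLE hr i) ^ 2
        - ρ₁ * ∑ i : Fin s, δ i * zbar (Fin.castLE (hs.trans hr) i) ^ 2
      ≤ ((r : ℝ) + ρ₁ * s) / 4 *
        Finset.univ.sup' (Finset.univ_nonempty_iff.mpr (Fin.pos_iff_nonempty.mp hr0))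
          (fun i : Fin r => (u i - l i) ^ 2) := by
  set M := Finset.univ.sup' (Finset.univ_nonempty_iff.mpr (Fin.pos_iff_nonempty.mp hr0))
      (fun i : Fin r => (u i - l i) ^ 2)
  have hwidth (i : Fin r) : (u i - l i) ^ 2 ≤ M := Finset.le_sup' (fun i => (u i - l i) ^ 2) (Finset.mem_univ i)
  have hM : 0 ≤ M := (sq_nonneg _).trans (hwidth ⟨0, hr0⟩)
  have hgap (i : Fin r) : tbar i - zbar (Fin.castLE hr i) ^ 2 ≤ M / 4 := by
    linarith [sub_sq_le_of_le_secant (hsec i), hwidth i]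
  have hθsum := sum_mul_le_card_mul_of_le (fun i => ⟨(hθ i).1.le, (hθ i).2⟩) hgap (by positivity)
  have hδsum := sum_mul_le_card_mul_of_le (fun i => ⟨(hδ i).1.le, (hδ i).2⟩)
    (fun i => hgap (Fin.castLE hs i)) (by positivity)
  simp only [mul_sub, Finset.sum_sub_distrib, Fintype.card_fin, Fin.castLE_castLE] at hθsum hδsum
  have := mul_le_mul_of_nonneg_left hδsum hρ.le
  linarith

theorem stmt12 {m r s : ℕ} (hr : r ≤ m) (hs : s ≤ r) (hr0 : 0 < r)
    (ψ : (Fin m → ℝ) → ℝ) (θ : Fin r → ℝ) (δ : Fin s → ℝ)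
    (hθ : ∀ i, 0 < θ i ∧ θ i ≤ 1) (hδ : ∀ i, 0 < δ i ∧ δ i ≤ 1)
    (ρ₁ : ℝ) (hρ : 0 < ρ₁) (zbar : Fin m → ℝ) (tbar : Fin r → ℝ)
    (l u : Fin r → ℝ)
    (hrel : ψ zbar - ∑ i : Fin r, θ i * tbar i
        - ρ₁ * ∑ i : Fin s, δ i * tbar (Fin.castLE hs i) ≤ 0)
    (hsq : ∀ i : Fin r, zbar (Fin.castLE hr i) ^ 2 ≤ tbar i)
    (hbox : ∀ i : Fin r, l i ≤ zbar (Fin.castLE hr i) ∧ zbar (Fin.castLE hr i) ≤ u i)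
    (hsec : ∀ i : Fin r, tbar i ≤ (l i + u i) * zbar (Fin.castLE hr i) - l i * u i) :
    ψ zbar - ∑ i : Fin r, θ i * zbar (Fin.castLE hr i) ^ 2
        - ρ₁ * ∑ i : Fin s, δ i * zbar (Fin.castLE (hs.trans hr) i) ^ 2
      ≤ ((r : ℝ) + ρ₁ * s) / 4 *
        Finset.univ.sup' (Finset.univ_nonempty_iff.mpr (Fin.pos_iff_nonempty.mp hr0))
          (fun i : Fin r => (u i - l i) ^ 2) :=
  stmt12_general hr hs hr0 ψ θ δ hθ hδ ρ₁ hρ zbar tbar l u hrel hsec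
end

section
/- Let g: ℝ^m → ℝ be differentiable and convex, Z ⊆ ℝ^m convex with nonempty interior characterized by box constraints -x₀ ≤ Dz ≤ 0 for a nonsingular D. Suppose z̄ ∈ Z minimizes g over Z with g(z̄) = 0, and the gradients of the active box constraints together with ∇g(z̄) are linearly independent. Then there is a contradiction; equivalently, if the linear independence constraint qualification holds at z̄ for the system {g ≤ 0, -x₀ ≤ Dz ≤ 0}, then {z ∈ Z : g(z) < 0} is nonempty. -/
/-!
Along an inactive box constraint `k` one can move from `z̄` in both directions `±D⁻¹eₖ` without
leaving `Z`, so first-order optimality forces `∇g(z̄) ⬝ D⁻¹eₖ = 0`. These numbers are the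
coordinates of `∇g(z̄)` in the basis of rows of `D`, hence `∇g(z̄)` lies in the span of the active
rows, against linear independence.
-/

open Matrix Filter Set Topology

theorem IsMinOn.hasFDerivAt_apply_eq_zero {E : Type*} [NormedAddCommGroup E] [NormedSpace ℝ E]
    {f : E → ℝ} {f' : StrongDual ℝ E} {s : Set E} {a y : E} (h : IsMinOn f s a)
    (hf : HasFDerivAt f f' a) (hy : ∀ᶠ t : ℝ in 𝓝 0, a + t • y ∈ s) : f' y = 0 := by
  have hy' : ∀ᶠ t : ℝ in 𝓝 0, a + t • -y ∈ s := by
    simpa [neg_smul, smul_neg] using (continuous_neg.tendsto' (0 : ℝ) 0 neg_zero).eventually hy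
  exact h.localize.hasFDerivWithinAt_eq_zero hf.hasFDerivWithinAt
    (mem_posTangentConeAt_of_frequently_mem (hy.filter_mono nhdsWithin_le_nhds).frequently)
    (mem_posTangentConeAt_of_frequently_mem (hy'.filter_mono nhdsWithin_le_nhds).frequently)

theorem eventually_add_smul_single_mem_Icc {ι : Type*} [DecidableEq ι] {a b v : ι → ℝ}
    (hv : v ∈ Icc a b) {k : ι} (hk : v k ∈ Ioo (a k) (b k)) :
    ∀ᶠ t : ℝ in 𝓝 0, v + t • Pi.single k 1 ∈ Icc a b := by
  have hcont : Tendsto (fun t : ℝ => v k + t) (𝓝 0) (𝓝 (v k)) := by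
    simpa using (continuous_const_add (v k)).tendsto 0
  filter_upwards [hcont.eventually (Ioo_mem_nhds hk.1 hk.2)] with t ht
  have hupd : v + t • Pi.single k 1 = Function.update v k (v k + t) := by
    ext i
    rcases eq_or_ne i k with rfl | hi <;> simp [*]
  rw [hupd, ← pi_univ_Icc, update_mem_pi_iff_of_mem (pi_univ_Icc a b ▸ hv)]
  exact fun _ => Ioo_subset_Icc_self ht

theorem mem_span_rows_of_dotProduct_inv_mulVec_single_eq_zero {n : Type*} [Fintype n]
    [DecidableEq n] {D : Matrix n n ℝ} (hD : IsUnit D) {p : n → Prop} {w : n → ℝ}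
    (hw : ∀ k, ¬ p k → w ⬝ᵥ (D⁻¹ *ᵥ Pi.single k 1) = 0) :
    w ∈ Submodule.span ℝ (range fun i : {i // p i} => D i) := by
  have hcoeff : ∀ k, (w ᵥ* D⁻¹) k = w ⬝ᵥ (D⁻¹ *ᵥ Pi.single k 1) := fun k => by
    rw [dotProduct_mulVec, dotProduct_single, mul_one]
  have hdecomp : w = ∑ k, (w ᵥ* D⁻¹) k • D k := by
    rw [← vecMul_eq_sum, vecMul_vecMul,
      nonsing_inv_mul D ((isUnit_iff_isUnit_det D).mp hD), vecMul_one]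
  rw [hdecomp]
  refine Submodule.sum_mem _ fun k _ => ?_
  by_cases hk : p k
  · exact Submodule.smul_mem _ _ (Submodule.subset_span ⟨⟨k, hk⟩, rfl⟩)
  · rw [hcoeff, hw k hk, zero_smul]
    exact Submodule.zero_mem _

theorem mem_span_active_rows_of_isMinOn {n : Type*} [Fintype n] [DecidableEq n]
    {f : (n → ℝ) → ℝ} {f' : StrongDual ℝ (n → ℝ)} {w : n → ℝ} (hw : ∀ v, f' v = w ⬝ᵥ v)
    {D : Matrix n n ℝ} (hD : IsUnit D) {a b z : n → ℝ} (hz : D *ᵥ z ∈ Icc a b)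
    (hmin : IsMinOn f ((D *ᵥ ·) ⁻¹' Icc a b) z) (hf : HasFDerivAt f f' z) :
    w ∈ Submodule.span ℝ
      (range fun i : {i // (D *ᵥ z) i = b i ∨ (D *ᵥ z) i = a i} => D i) := by
  refine mem_span_rows_of_dotProduct_inv_mulVec_single_eq_zero hD fun k hk => ?_
  rw [← hw]
  refine hmin.hasFDerivAt_apply_eq_zero hf ?_
  have hinv : D * D⁻¹ = 1 := mul_nonsing_inv D ((isUnit_iff_isUnit_det D).mp hD)
  have hk' : (D *ᵥ z) k ∈ Ioo (a k) (b k) := by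
    rw [not_or] at hk
    exact ⟨lt_of_le_of_ne (hz.1 k) (Ne.symm hk.2), lt_of_le_of_ne (hz.2 k) hk.1⟩
  filter_upwards [eventually_add_smul_single_mem_Icc hz hk'] with t ht
  rwa [mem_preimage, mulVec_add, mulVec_smul, mulVec_mulVec, hinv, one_mulVec]

theorem stmt19_general {m : ℕ} (g : (Fin m → ℝ) → ℝ) (hgdiff : Differentiable ℝ g)
    (D : Matrix (Fin m) (Fin m) ℝ) (hD : IsUnit D) (x₀ : Fin m → ℝ)
    (Z : Set (Fin m → ℝ))
    (hZ : Z = {z | ∀ i, -x₀ i ≤ (D *ᵥ z) i ∧ (D *ᵥ z) i ≤ 0})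
    (zbar : Fin m → ℝ) (hzbar : zbar ∈ Z)
    (hmin : ∀ z ∈ Z, g zbar ≤ g z)
    (w : Fin m → ℝ) (hw : ∀ v, fderiv ℝ g zbar v = w ⬝ᵥ v)
    (hLI : LinearIndependent ℝ
      (fun o : Option {i : Fin m // (D *ᵥ zbar) i = 0 ∨ (D *ᵥ zbar) i = -x₀ i} =>
        o.elim w (fun i => fun j => D i.1 j))) :
    False := by
  have hZ' : Z = (D *ᵥ ·) ⁻¹' Icc (-x₀) 0 := by
    ext z
    simp [hZ, Pi.le_def, forall_and]
  subst hZ'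
  exact (linearIndependent_option.mp hLI).2
    (mem_span_active_rows_of_isMinOn hw hD hzbar hmin (hgdiff zbar).hasFDerivAt)

theorem stmt19 {m : ℕ} (g : (Fin m → ℝ) → ℝ) (hgdiff : Differentiable ℝ g)
    (hgconv : ConvexOn ℝ Set.univ g)
    (D : Matrix (Fin m) (Fin m) ℝ) (hD : IsUnit D) (x₀ : Fin m → ℝ)
    (Z : Set (Fin m → ℝ))
    (hZ : Z = {z | ∀ i, -x₀ i ≤ (D *ᵥ z) i ∧ (D *ᵥ z) i ≤ 0})
    (zbar : Fin m → ℝ) (hzbar : zbar ∈ Z) (hg0 : g zbar = 0)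
    (hmin : ∀ z ∈ Z, g zbar ≤ g z)
    (w : Fin m → ℝ) (hw : ∀ v, fderiv ℝ g zbar v = w ⬝ᵥ v)
    (hLI : LinearIndependent ℝ
      (fun o : Option {i : Fin m // (D *ᵥ zbar) i = 0 ∨ (D *ᵥ zbar) i = -x₀ i} =>
        o.elim w (fun i => fun j => D i.1 j))) :
    False :=
  stmt19_general g hgdiff D hD x₀ Z hZ zbar hzbar hmin w hw hLI
end
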